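/- Let F ∈ B_c, t > 0 and u(x,t) = ∫_ℝ F(x−ξ) Θ_t'(ξ) dξ. Then the Alexiewicz norm of u(·,t) satisfies sup_{x<y} |∫_x^y u(ξ,t) dξ| ≤ ‖F‖'_∞. Moreover this inequality is sharp: the supremum over all nonzero F ∈ B_c of (sup_{x<y} |∫_x^y u(ξ,t) dξ|) / ‖F‖'_∞ equals 1. -/

import Mathlib

open MeasureTheory Filter Topology

/-- The Gauss–Weierstrass heat kernel `Θ_t(x) = (4πt)^(−1/2) exp(−x²/(4t))` for `t > 0`. -/
noncomputable def heatK (t x : ℝ) : ℝ :=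
  (Real.sqrt (4 * Real.pi * t))⁻¹ * Real.exp (-x ^ 2 / (4 * t))

/-- Spatial derivative of the heat kernel: `Θ_t'(ξ) = −ξ Θ_t(ξ)/(2t)`. -/
noncomputable def heatK' (t x : ℝ) : ℝ := -x * heatK t x / (2 * t)

/-- `F ∈ B_c`: continuous, vanishing at `−∞`, with a finite limit at `+∞`. -/
def memBc (F : ℝ → ℝ) : Prop :=
  Continuous F ∧ Tendsto F atBot (nhds (0 : ℝ)) ∧ ∃ L : ℝ, Tendsto F atTop (nhds L)

/-- `‖F‖'_∞ = sup_{x<y} |F(x) − F(y)|`. -/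
noncomputable def normBc (F : ℝ → ℝ) : ℝ :=
  sSup {r : ℝ | ∃ x y : ℝ, x < y ∧ r = |F x - F y|}

/-- Alexiewicz norm of a (continuous) function: `sup_{x<y} |∫_x^y v|`. -/
noncomputable def alexNorm (v : ℝ → ℝ) : ℝ :=
  sSup {r : ℝ | ∃ x y : ℝ, x < y ∧ r = |∫ ξ in x..y, v ξ|}

/-- Heat convolution `u(x,t) = ∫ F(x−ξ) Θ_t'(ξ) dξ` of the distribution `f = F'`. -/
noncomputable def heatConv (F : ℝ → ℝ) (t x : ℝ) : ℝ := ∫ ξ : ℝ, F (x - ξ) * heatK' t ξ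


open Set Bornology

/-!
Integrating `u(·,t)` over `[x, y]`, swapping the integrals and applying the fundamental theorem
of calculus to `Θ_t` gives `∫_x^y u = ∫ (F(y - ξ) - F(x - ξ)) Θ_t(ξ) dξ`: an average of
oscillations of `F` against the probability density `Θ_t`, hence at most `‖F‖'_∞`.
For sharpness take a ramp `F` rising from `0` to `1`: then `‖F‖'_∞ ≤ 1`, while by dominated
convergence `∫_{-R}^R u → F(∞) - F(-∞) = 1` as `R → ∞`.
-/

section PairSup

variable {φ : ℝ → ℝ → ℝ} {C : ℝ}

theorem sSup_pairs_le (h : ∀ x y, x < y → φ x y ≤ C) :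
    sSup {r | ∃ x y : ℝ, x < y ∧ r = φ x y} ≤ C :=
  csSup_le ⟨φ 0 1, 0, 1, one_pos, rfl⟩ (by rintro r ⟨x, y, hxy, rfl⟩; exact h x y hxy)

theorem le_sSup_pairs (h : ∀ x y, x < y → φ x y ≤ C) {x y : ℝ} (hxy : x < y) :
    φ x y ≤ sSup {r | ∃ x y : ℝ, x < y ∧ r = φ x y} :=
  le_csSup ⟨C, by rintro r ⟨x, y, hxy, rfl⟩; exact h x y hxy⟩ ⟨x, y, hxy, rfl⟩

end PairSup

theorem abs_sub_le_normBc {F : ℝ → ℝ} (hF : IsBounded (range F)) {x y : ℝ} (hxy : x < y) :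
    |F x - F y| ≤ normBc F :=
  le_sSup_pairs (φ := fun x y => |F x - F y|) (C := Metric.diam (range F))
    (fun x y _ => Metric.dist_le_diam_of_mem hF (mem_range_self x) (mem_range_self y)) hxy

theorem normBc_nonneg {F : ℝ → ℝ} (hF : IsBounded (range F)) : 0 ≤ normBc F :=
  (abs_nonneg _).trans (abs_sub_le_normBc hF zero_lt_one)

theorem Continuous.isBounded_range_of_tendsto {F : ℝ → ℝ} (hFc : Continuous F) {a b : ℝ}
    (ha : Tendsto F atBot (𝓝 a)) (hb : Tendsto F atTop (𝓝 b)) : IsBounded (range F) :=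
  hFc.isBounded_range_iff_isBigO_atTop_atBot.2 ⟨hb.isBigO_one ℝ, ha.isBigO_one ℝ⟩

theorem memBc.isBounded_range {F : ℝ → ℝ} (hF : memBc F) : IsBounded (range F) :=
  let ⟨hFc, ha, _, hb⟩ := hF
  hFc.isBounded_range_of_tendsto ha hb

theorem integral_mul_comp_sub (f g : ℝ → ℝ) (c : ℝ) :
    ∫ ζ, f ζ * g (c - ζ) = ∫ ξ, f (c - ξ) * g ξ := by
  rw [← integral_sub_left_eq_self _ volume c]
  simp only [sub_sub_cancel]

theorem intervalIntegral_conv_deriv {F K K' : ℝ → ℝ} (hFc : Continuous F)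
    (hFb : IsBounded (range F)) (hK : ∀ x, HasDerivAt K (K' x) x) (hK' : Integrable K')
    (hKi : Integrable K) (x y : ℝ) :
    ∫ η in x..y, ∫ ξ, F (η - ξ) * K' ξ = ∫ ξ, (F (y - ξ) - F (x - ξ)) * K ξ := by
  obtain ⟨C, hC⟩ := isBounded_iff_forall_norm_le.1 hFb
  have hFC : ∀ ζ, ‖F ζ‖ ≤ C := fun ζ => hC _ (mem_range_self ζ)
  have hprod : Integrable (fun p : ℝ × ℝ => F p.2 * K' (p.1 - p.2))
      ((volume.restrict (uIoc x y)).prod volume) := by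
    have : IsFiniteMeasure (volume.restrict (uIoc x y)) :=
      isFiniteMeasure_restrict.2 measure_Ioc_lt_top.ne
    -- `K' (η - ζ)` is the convolution integrand of `1` and `K' ∘ neg`
    have hK'sub := ((integrable_const (1 : ℝ)).convolution_integrand
      (ContinuousLinearMap.mul ℝ ℝ) hK'.comp_neg (μ := volume)
      (ν := volume.restrict (uIoc x y))).swap
    simp only [ContinuousLinearMap.mul_apply', one_mul, Function.comp_def, Prod.fst_swap,
      Prod.snd_swap, neg_sub] at hK'sub
    exact hK'sub.bdd_mul (hFc.comp continuous_snd).aestronglyMeasurable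
      (Eventually.of_forall fun p => hFC p.2)
  have hftc : ∀ ζ, ∫ η in x..y, K' (η - ζ) = K (y - ζ) - K (x - ζ) := fun ζ =>
    intervalIntegral.integral_eq_sub_of_hasDerivAt
      (fun η _ => by simpa using (hK (η - ζ)).comp_sub_const η ζ)
      (hK'.comp_sub_right ζ).intervalIntegrable
  have hKF : ∀ c, Integrable fun ζ => F ζ * K (c - ζ) := fun c =>
    (hKi.comp_sub_left c).bdd_mul hFc.aestronglyMeasurable (Eventually.of_forall hFC)
  have hFK : ∀ c, Integrable fun ξ => F (c - ξ) * K ξ := fun c =>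
    hKi.bdd_mul (by fun_prop) (Eventually.of_forall fun ξ => hFC _)
  calc ∫ η in x..y, ∫ ξ, F (η - ξ) * K' ξ
      = ∫ ζ, ∫ η in x..y, F ζ * K' (η - ζ) := by
        simp_rw [← integral_mul_comp_sub F K']
        exact intervalIntegral_integral_swap hprod
    _ = ∫ ζ, (F ζ * K (y - ζ) - F ζ * K (x - ζ)) := by
        simp_rw [intervalIntegral.integral_const_mul, hftc, mul_sub]
    _ = (∫ ζ, F ζ * K (y - ζ)) - ∫ ζ, F ζ * K (x - ζ) := integral_sub (hKF y) (hKF x)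
    _ = ∫ ξ, (F (y - ξ) - F (x - ξ)) * K ξ := by
        simp_rw [integral_mul_comp_sub, sub_mul]
        exact (integral_sub (hFK y) (hFK x)).symm

theorem heatK_pos {t : ℝ} (ht : 0 < t) (x : ℝ) : 0 < heatK t x := by
  unfold heatK; positivity

theorem heatK_eq_gaussian (t : ℝ) :
    heatK t = fun x => (Real.sqrt (4 * Real.pi * t))⁻¹ * Real.exp (-(4 * t)⁻¹ * x ^ 2) := by
  ext x; rw [heatK, neg_div, div_eq_inv_mul, neg_mul]

@[fun_prop]
theorem continuous_heatK (t : ℝ) : Continuous (heatK t) := by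
  unfold heatK; fun_prop

theorem integrable_heatK {t : ℝ} (ht : 0 < t) : Integrable (heatK t) := by
  rw [heatK_eq_gaussian]
  exact (integrable_exp_neg_mul_sq (by positivity : 0 < (4 * t)⁻¹)).const_mul _

theorem integral_heatK {t : ℝ} (ht : 0 < t) : ∫ x, heatK t x = 1 := by
  simp_rw [heatK_eq_gaussian, integral_const_mul, integral_gaussian, div_inv_eq_mul]
  rw [show Real.pi * (4 * t) = 4 * Real.pi * t by ring, inv_mul_cancel₀ (by positivity)]

theorem integrable_heatK' {t : ℝ} (ht : 0 < t) : Integrable (heatK' t) := by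
  refine ((integrable_mul_exp_neg_mul_sq (by positivity : 0 < (4 * t)⁻¹)).const_mul
    (-(Real.sqrt (4 * Real.pi * t))⁻¹ / (2 * t))).congr (Eventually.of_forall fun x => ?_)
  simp only [heatK', heatK_eq_gaussian]
  ring

theorem hasDerivAt_heatK (t x : ℝ) : HasDerivAt (heatK t) (heatK' t x) x := by
  have hexponent : HasDerivAt (fun x => -x ^ 2 / (4 * t)) (-(2 * x) / (4 * t)) x := by
    simpa using (hasDerivAt_pow 2 x).neg.div_const (4 * t)
  refine (hexponent.exp.const_mul _).congr_deriv ?_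
  simp only [heatK', heatK]
  ring

theorem integral_heatConv {F : ℝ → ℝ} (hFc : Continuous F) (hFb : IsBounded (range F))
    {t : ℝ} (ht : 0 < t) (x y : ℝ) :
    ∫ η in x..y, heatConv F t η = ∫ ξ, (F (y - ξ) - F (x - ξ)) * heatK t ξ :=
  intervalIntegral_conv_deriv hFc hFb (hasDerivAt_heatK t) (integrable_heatK' ht)
    (integrable_heatK ht) x y

theorem norm_sub_mul_heatK_le {F : ℝ → ℝ} (hF : IsBounded (range F)) {t : ℝ} (ht : 0 < t)
    {x y : ℝ} (hxy : x < y) (ξ : ℝ) :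
    ‖(F (y - ξ) - F (x - ξ)) * heatK t ξ‖ ≤ normBc F * heatK t ξ := by
  rw [norm_mul, Real.norm_eq_abs, Real.norm_of_nonneg (heatK_pos ht ξ).le, abs_sub_comm]
  exact mul_le_mul_of_nonneg_right (abs_sub_le_normBc hF (by linarith)) (heatK_pos ht ξ).le

theorem abs_integral_heatConv_le {F : ℝ → ℝ} (hFc : Continuous F) (hFb : IsBounded (range F))
    {t : ℝ} (ht : 0 < t) {x y : ℝ} (hxy : x < y) :
    |∫ η in x..y, heatConv F t η| ≤ normBc F := by
  rw [integral_heatConv hFc hFb ht]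
  calc _ ≤ ∫ ξ, normBc F * heatK t ξ :=
        norm_integral_le_of_norm_le ((integrable_heatK ht).const_mul _)
          (Eventually.of_forall (norm_sub_mul_heatK_le hFb ht hxy))
    _ = normBc F := by rw [integral_const_mul, integral_heatK ht, mul_one]

theorem alexNorm_heatConv_le_normBc {F : ℝ → ℝ} (hFc : Continuous F)
    (hFb : IsBounded (range F)) {t : ℝ} (ht : 0 < t) : alexNorm (heatConv F t) ≤ normBc F :=
  sSup_pairs_le fun _ _ hxy => abs_integral_heatConv_le hFc hFb ht hxy

theorem tendsto_integral_heatConv {F : ℝ → ℝ} (hFc : Continuous F) {a b : ℝ}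
    (ha : Tendsto F atBot (𝓝 a)) (hb : Tendsto F atTop (𝓝 b)) {t : ℝ} (ht : 0 < t) :
    Tendsto (fun R => ∫ η in -R..R, heatConv F t η) atTop (𝓝 (b - a)) := by
  have hFb := hFc.isBounded_range_of_tendsto ha hb
  have hlim := tendsto_integral_filter_of_dominated_convergence (μ := volume) (l := atTop)
    (F := fun R ξ => (F (R - ξ) - F (-R - ξ)) * heatK t ξ) (f := fun ξ => (b - a) * heatK t ξ)
    (fun ξ => normBc F * heatK t ξ)
    (Eventually.of_forall fun R => (by fun_prop : Continuous _).aestronglyMeasurable)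
    ((eventually_gt_atTop 0).mono fun R hR =>
      Eventually.of_forall (norm_sub_mul_heatK_le hFb ht (by linarith)))
    ((integrable_heatK ht).const_mul _)
    (Eventually.of_forall fun ξ =>
      ((hb.comp (tendsto_atTop_add_const_right _ (-ξ) tendsto_id)).sub
        (ha.comp (tendsto_atBot_add_const_right _ (-ξ) tendsto_neg_atTop_atBot))).mul_const _)
  rw [integral_const_mul, integral_heatK ht, mul_one] at hlim
  simpa only [integral_heatConv hFc hFb ht] using hlim

theorem abs_sub_le_alexNorm_heatConv {F : ℝ → ℝ} (hFc : Continuous F) {a b : ℝ}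
    (ha : Tendsto F atBot (𝓝 a)) (hb : Tendsto F atTop (𝓝 b)) {t : ℝ} (ht : 0 < t) :
    |b - a| ≤ alexNorm (heatConv F t) := by
  have hFb := hFc.isBounded_range_of_tendsto ha hb
  refine le_of_tendsto (tendsto_integral_heatConv hFc ha hb ht).abs
    ((eventually_gt_atTop 0).mono fun R hR => ?_)
  exact le_sSup_pairs (φ := fun x y => |∫ η in x..y, heatConv F t η|)
    (fun _ _ hxy => abs_integral_heatConv_le hFc hFb ht hxy) (by linarith : -R < R)

def ramp (x : ℝ) : ℝ := max 0 (min x 1)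

theorem continuous_ramp : Continuous ramp := by
  unfold ramp; fun_prop

theorem tendsto_ramp_atBot : Tendsto ramp atBot (𝓝 0) :=
  tendsto_const_nhds.congr' <| (eventually_le_atBot 0).mono fun x hx => by
    simp [ramp, min_le_of_left_le hx]

theorem tendsto_ramp_atTop : Tendsto ramp atTop (𝓝 1) :=
  tendsto_const_nhds.congr' <| (eventually_ge_atTop 1).mono fun x hx => by
    simp [ramp, hx]

theorem memBc_ramp : memBc ramp :=
  ⟨continuous_ramp, tendsto_ramp_atBot, 1, tendsto_ramp_atTop⟩

theorem ramp_ne_zero : ramp ≠ 0 := fun h => by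
  simpa [ramp] using congrFun h 1

theorem ramp_mem_Icc (x : ℝ) : ramp x ∈ Icc (0 : ℝ) 1 :=
  ⟨le_max_left _ _, max_le zero_le_one (min_le_right _ _)⟩

theorem normBc_ramp_le_one : normBc ramp ≤ 1 :=
  sSup_pairs_le fun x y _ => Real.dist_le_of_mem_Icc_01 (ramp_mem_Icc x) (ramp_mem_Icc y)

/-- The Alexiewicz norm of `u(·,t)` is at most `‖F‖'_∞`, and this is sharp: the supremum
over nonzero `F ∈ B_c` of the ratio of the two norms equals `1`. -/
theorem stmt3 (t : ℝ) (ht : 0 < t) :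
    (∀ F : ℝ → ℝ, memBc F → alexNorm (fun x => heatConv F t x) ≤ normBc F) ∧
    sSup {r : ℝ | ∃ F : ℝ → ℝ, memBc F ∧ F ≠ 0 ∧
      r = alexNorm (fun x => heatConv F t x) / normBc F} = 1 := by
  have hbound : ∀ F : ℝ → ℝ, memBc F → alexNorm (heatConv F t) ≤ normBc F := fun F hF =>
    alexNorm_heatConv_le_normBc hF.1 hF.isBounded_range ht
  have hramp := abs_sub_le_alexNorm_heatConv continuous_ramp tendsto_ramp_atBot
    tendsto_ramp_atTop ht
  obtain ⟨hA, hN⟩ : alexNorm (heatConv ramp t) = 1 ∧ normBc ramp = 1 := by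
    have := hbound ramp memBc_ramp
    norm_num at hramp
    constructor <;> linarith [normBc_ramp_le_one]
  refine ⟨hbound, IsGreatest.csSup_eq ⟨⟨ramp, memBc_ramp, ramp_ne_zero, ?_⟩, ?_⟩⟩
  · rw [hA, hN, div_one]
  · rintro r ⟨F, hF, -, rfl⟩
    exact div_le_one_of_le₀ (hbound F hF) (normBc_nonneg hF.isBounded_range)
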